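/- Quasi-convexity consequence for SubMix aggregation: for pmfs P₁, ..., P_k and Q₁, ..., Q_k on a finite type with each Q_j of full support, α > 1, and the averaged pmfs P̄ = (1/k)∑_j P_j and Q̄ = (1/k)∑_j Q_j, we have D_α(P̄‖Q̄) ≤ max over j of D_α(P_j‖Q_j). -/

import Mathlib

/-!
The map `(p, q) ↦ q * (p / q) ^ α` is the perspective of the convex function `t ↦ t ^ α`, hence
jointly convex and positively homogeneous, hence subadditive. Applied pointwise in `x`, this
bounds the Rényi sum `∑ x, Q̄ x * (P̄ x / Q̄ x) ^ α` of the averages by the average of the Rényi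
sums of the parts, so by one of them; and `t ↦ (α - 1)⁻¹ * log t` is monotone for `α > 1`.
-/

open Finset Real

def IsPMF {V : Type*} [Fintype V] (P : V → ℝ) : Prop :=
  (∀ x, 0 ≤ P x) ∧ ∑ x, P x = 1

noncomputable def renyiD {V : Type*} [Fintype V] (α : ℝ) (P Q : V → ℝ) : ℝ :=
  (α - 1)⁻¹ * Real.log (∑ x, Q x * (P x / Q x) ^ α)

/-- Jensen for `t ↦ t ^ α` at the points `p i / q i` with weights `q i / ∑ q`. -/
theorem sum_mul_div_rpow_le {ι : Type*} (s : Finset ι) (p q : ι → ℝ)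
    (hp : ∀ i ∈ s, 0 ≤ p i) (hq : ∀ i ∈ s, 0 < q i) {α : ℝ} (hα : 1 ≤ α) :
    (∑ i ∈ s, q i) * ((∑ i ∈ s, p i) / ∑ i ∈ s, q i) ^ α
      ≤ ∑ i ∈ s, q i * (p i / q i) ^ α := by
  rcases s.eq_empty_or_nonempty with rfl | hs
  · simp
  have hQ : 0 < ∑ i ∈ s, q i := sum_pos hq hs
  have hjensen := (convexOn_rpow hα).map_sum_le (t := s) (w := fun i => q i / ∑ i ∈ s, q i)
    (p := fun i => p i / q i) (fun i hi => (div_pos (hq i hi) hQ).le)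
    (by rw [← sum_div, div_self hQ.ne']) (fun i hi => div_nonneg (hp i hi) (hq i hi).le)
  have hmean : ∑ i ∈ s, q i / (∑ i ∈ s, q i) * (p i / q i) = (∑ i ∈ s, p i) / ∑ i ∈ s, q i := by
    rw [sum_div]
    refine sum_congr rfl fun i hi => ?_
    field_simp [(hq i hi).ne']
  simp only [smul_eq_mul, hmean] at hjensen
  calc (∑ i ∈ s, q i) * ((∑ i ∈ s, p i) / ∑ i ∈ s, q i) ^ α
      ≤ (∑ i ∈ s, q i) * ∑ i ∈ s, q i / (∑ i ∈ s, q i) * (p i / q i) ^ α :=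
        mul_le_mul_of_nonneg_left hjensen hQ.le
    _ = ∑ i ∈ s, q i * (p i / q i) ^ α := by
        rw [mul_sum]
        refine sum_congr rfl fun i _ => ?_
        field_simp [hQ.ne']

theorem sum_average_mul_div_rpow_le {ι V : Type*} [Fintype ι] [Fintype V] (P Q : ι → V → ℝ)
    (hP : ∀ j x, 0 ≤ P j x) (hQ : ∀ j x, 0 < Q j x) {c : ℝ} (hc : 0 < c) {α : ℝ} (hα : 1 ≤ α) :
    ∑ x, (c * ∑ j, Q j x) * ((c * ∑ j, P j x) / (c * ∑ j, Q j x)) ^ α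
      ≤ c * ∑ j, ∑ x, Q j x * (P j x / Q j x) ^ α := by
  rw [sum_comm, mul_sum]
  refine sum_le_sum fun x _ => ?_
  rw [mul_div_mul_left _ _ hc.ne', mul_assoc]
  exact mul_le_mul_of_nonneg_left
    (sum_mul_div_rpow_le _ _ _ (fun j _ => hP j x) (fun j _ => hQ j x) hα) hc.le

theorem sum_mul_div_rpow_pos {V : Type*} [Fintype V] {P Q : V → ℝ} (hP : IsPMF P)
    (hQ : ∀ x, 0 < Q x) (α : ℝ) : 0 < ∑ x, Q x * (P x / Q x) ^ α := by
  obtain ⟨x₀, -, hx₀⟩ : ∃ x ∈ univ, (0 : ℝ) < P x :=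
    exists_lt_of_sum_lt (by rw [hP.2, sum_const_zero]; exact one_pos)
  exact sum_pos' (fun x _ => mul_nonneg (hQ x).le (rpow_nonneg (div_nonneg (hP.1 x) (hQ x).le) α))
    ⟨x₀, mem_univ _, mul_pos (hQ x₀) (rpow_pos_of_pos (div_pos hx₀ (hQ x₀)) α)⟩

theorem isPMF_average {V : Type*} [Fintype V] {k : ℕ} [NeZero k] {P : Fin k → V → ℝ}
    (hP : ∀ j, IsPMF (P j)) : IsPMF (fun x => (1 / (k : ℝ)) * ∑ j, P j x) := by
  refine ⟨fun x => mul_nonneg (by positivity) (sum_nonneg fun j _ => (hP j).1 x), ?_⟩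
  rw [← mul_sum, sum_comm, sum_congr rfl fun j _ => (hP j).2]
  simp [NeZero.ne k]

theorem renyiD_le_renyiD_of_sum_le {V W : Type*} [Fintype V] [Fintype W] {α : ℝ} (hα : 1 < α)
    {P Q : V → ℝ} {P' Q' : W → ℝ} (hpos : 0 < ∑ x, Q x * (P x / Q x) ^ α)
    (hle : ∑ x, Q x * (P x / Q x) ^ α ≤ ∑ y, Q' y * (P' y / Q' y) ^ α) :
    renyiD α P Q ≤ renyiD α P' Q' :=
  mul_le_mul_of_nonneg_left (log_le_log hpos hle) (inv_nonneg.2 (sub_nonneg.2 hα.le))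

theorem renyi_avg_le_max_general {V : Type*} [Fintype V]
    {k : ℕ} [NeZero k]
    (P Q : Fin k → V → ℝ) (hP : ∀ j, IsPMF (P j))
    (hQpos : ∀ j x, 0 < Q j x) {α : ℝ} (hα : 1 < α) :
    renyiD α (fun x => (1 / (k : ℝ)) * ∑ j, P j x)
             (fun x => (1 / (k : ℝ)) * ∑ j, Q j x)
      ≤ ⨆ j : Fin k, renyiD α (P j) (Q j) := by
  set S := ∑ x, ((1 / (k : ℝ)) * ∑ j, Q j x) *
    (((1 / (k : ℝ)) * ∑ j, P j x) / ((1 / (k : ℝ)) * ∑ j, Q j x)) ^ α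
  have hk : (0 : ℝ) < k := Nat.cast_pos.2 (Nat.pos_of_neZero k)
  have hQavg : ∀ x, 0 < (1 / (k : ℝ)) * ∑ j, Q j x :=
    fun x => mul_pos (by positivity) (sum_pos (fun j _ => hQpos j x) univ_nonempty)
  have hS : S ≤ (1 / (k : ℝ)) * ∑ j, ∑ x, Q j x * (P j x / Q j x) ^ α :=
    sum_average_mul_div_rpow_le P Q (fun j => (hP j).1) hQpos (by positivity) hα.le
  obtain ⟨j, -, hj⟩ : ∃ j ∈ univ, S ≤ ∑ x, Q j x * (P j x / Q j x) ^ α := by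
    refine exists_le_of_sum_le univ_nonempty ?_
    rwa [sum_const, card_univ, Fintype.card_fin, nsmul_eq_mul, ← le_div_iff₀' hk, div_eq_inv_mul,
      ← one_div]
  calc _ ≤ renyiD α (P j) (Q j) :=
        renyiD_le_renyiD_of_sum_le hα (sum_mul_div_rpow_pos (isPMF_average hP) hQavg α) hj
    _ ≤ ⨆ j : Fin k, renyiD α (P j) (Q j) :=
        le_ciSup (Set.finite_range fun j => renyiD α (P j) (Q j)).bddAbove j

/-- Joint quasi-convexity of the Rényi divergence: the divergence of the
averages is at most the worst per-part divergence. -/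
theorem renyi_avg_le_max {V : Type*} [Fintype V] [Nonempty V]
    {k : ℕ} [NeZero k]
    (P Q : Fin k → V → ℝ) (hP : ∀ j, IsPMF (P j)) (hQ : ∀ j, IsPMF (Q j))
    (hQpos : ∀ j x, 0 < Q j x) {α : ℝ} (hα : 1 < α) :
    renyiD α (fun x => (1 / (k : ℝ)) * ∑ j, P j x)
             (fun x => (1 / (k : ℝ)) * ∑ j, Q j x)
      ≤ ⨆ j : Fin k, renyiD α (P j) (Q j) :=
  renyi_avg_le_max_general P Q hP hQpos hα
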